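/- Define QBER(p) = 1 − (1 − 3p + 28p²/9 − 28p³/27)/(1 − 8p/3 + 28p²/9 − 32p³/27) for p ∈ [0,1]. Then QBER(p) < p for every p ∈ (0, 1/2), and QBER(1/2) = 1/2. (Hence the probability threshold of the single-qubit error-detection scheme using two noisy EPR pairs is p_th = 1/2.) -/

import Mathlib

/-!
Numerator and denominator of the success probability share the factor `3 - 2p`, and
cancelling it gives `QBER(p) = p (3 + 2p) / (16p² - 18p + 9)`, whose denominator has no real
root. Hence `p - QBER(p) = 2p (1 - 2p)(3 - 4p) / (16p² - 18p + 9)`, which is positive on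
`(0, 1/2)` and vanishes at `p = 1/2`.
-/

/-- The qubit error ratio of the single-qubit error-detection scheme using two noisy EPR
pairs over quantum depolarizing channels with depolarizing probability `p`. -/
noncomputable def QBER (p : ℝ) : ℝ :=
  1 - (1 - 3*p + 28*p^2/9 - 28*p^3/27) / (1 - 8*p/3 + 28*p^2/9 - 32*p^3/27)

lemma QBER_denom_pos (p : ℝ) : 0 < 16 * p ^ 2 - 18 * p + 9 := by
  nlinarith [sq_nonneg (4 * p - 9 / 4)]

lemma QBER_eq {p : ℝ} (hp : p ≠ 3 / 2) :
    QBER p = p * (3 + 2 * p) / (16 * p ^ 2 - 18 * p + 9) := by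
  have hE := (QBER_denom_pos p).ne'
  have hD : 1 - 8*p/3 + 28*p^2/9 - 32*p^3/27 ≠ 0 := by
    have hden : 1 - 8*p/3 + 28*p^2/9 - 32*p^3/27
        = (3 - 2 * p) * (16 * p ^ 2 - 18 * p + 9) / 27 := by ring
    rw [hden]
    exact div_ne_zero (mul_ne_zero (sub_ne_zero.2 fun h => hp (by linarith)) hE) (by norm_num)
  rw [QBER, one_sub_div hD, div_eq_div_iff hD hE]
  ring

lemma sub_QBER_eq {p : ℝ} (hp : p ≠ 3 / 2) :
    p - QBER p = 2 * p * (1 - 2 * p) * (3 - 4 * p) / (16 * p ^ 2 - 18 * p + 9) := by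
  rw [QBER_eq hp, sub_div' (QBER_denom_pos p).ne']
  ring

/-- `QBER(p) < p` for every `p ∈ (0, 1/2)`, and `QBER(1/2) = 1/2`; hence the probability
threshold of the single-qubit error-detection scheme using two noisy EPR pairs is
`p_th = 1/2`. -/
theorem stmt6 :
    (∀ p ∈ Set.Ioo (0 : ℝ) (1/2), QBER p < p) ∧ QBER (1/2) = 1/2 := by
  constructor
  · rintro p ⟨hp0, hp1⟩
    have hgap : 0 < p - QBER p := by
      rw [sub_QBER_eq (by linarith)]
      have : 0 < 1 - 2 * p := by linarith
      have : 0 < 3 - 4 * p := by linarith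
      have := QBER_denom_pos p
      positivity
    linarith
  · norm_num [QBER]
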